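/- arXiv:0807.2046 — 3 statements merged into one kernel-verified Lean document; each statement's English description precedes it below -/
import Mathlib

section
/- Let E be a convex subset of a real normed vector space, let λ : E → ℝ be Lipschitz with constant L on E, and let ρ : E → ℝ be continuous with ρ(z) ≤ λ(z) for all z ∈ E. Suppose K > 0 is such that for every z ∈ E with ρ(z) < λ(z) there is an open neighborhood W of z such that ρ is Lipschitz with constant K on W ∩ E. Then ρ is Lipschitz on E with constant max(L, K). -/
open Set Filter Topology

lemma stmt_2_aux {V : Type*} [NormedAddCommGroup V] [NormedSpace ℝ V]
    (E : Set V) (hE : Convex ℝ E)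
    (lam rho : V → ℝ) (L K : ℝ) (hK : 0 < K)
    (hlam : ∀ x ∈ E, ∀ y ∈ E, |lam x - lam y| ≤ L * ‖x - y‖)
    (hrho_cont : ContinuousOn rho E)
    (hle : ∀ z ∈ E, rho z ≤ lam z)
    (hloc : ∀ z ∈ E, rho z < lam z →
      ∃ W : Set V, IsOpen W ∧ z ∈ W ∧
        ∀ x ∈ W ∩ E, ∀ y ∈ W ∩ E, |rho x - rho y| ≤ K * ‖x - y‖)
    {x y : V} (hx : x ∈ E) (hy : y ∈ E) :
    rho x - rho y ≤ max L K * ‖x - y‖ := by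
  rcases eq_or_ne x y with rfl | hxy
  · simp
  set d : ℝ := ‖x - y‖ with hd
  have hdpos : 0 < d := norm_sub_pos_iff.mpr hxy
  set M : ℝ := max L K with hM
  have hMpos : 0 < M := lt_of_lt_of_le hK (le_max_right _ _)
  set c : ℝ := M * d with hc
  have hcpos : 0 < c := mul_pos hMpos hdpos
  have hLd : L * d ≤ c := mul_le_mul_of_nonneg_right (le_max_left _ _) hdpos.le
  have hKd : K * d ≤ c := mul_le_mul_of_nonneg_right (le_max_right _ _) hdpos.le
  set γ : ℝ → V := fun t => x + t • (y - x) with hγ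
  have hγmem : ∀ t ∈ Icc (0:ℝ) 1, γ t ∈ E := by
    intro t ht
    have h1 : γ t = (1 - t) • x + t • y := by simp only [hγ]; module
    rw [h1]
    exact hE hx hy (by linarith [ht.2]) ht.1 (by ring)
  have hγdist : ∀ s t : ℝ, ‖γ s - γ t‖ = |s - t| * d := by
    intro s t
    have h1 : γ s - γ t = (s - t) • (y - x) := by simp only [hγ]; module
    rw [h1, norm_smul, Real.norm_eq_abs, hd, norm_sub_rev]
  have hγcont : Continuous γ := by fun_prop
  set g : ℝ → ℝ := fun t => rho (γ t) with hg
  have hgcont : ContinuousOn g (Icc 0 1) :=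
    hrho_cont.comp hγcont.continuousOn hγmem
  have hγ0 : γ 0 = x := by simp [hγ]
  have hγ1 : γ 1 = y := by simp [hγ]
  have hg0 : g 0 = rho x := by rw [hg]; simp [hγ0]
  have hg1 : g 1 = rho y := by rw [hg]; simp [hγ1]
  -- suffices to show `g 1 ≥ g 0 - c`
  by_contra hcon
  push_neg at hcon
  have hcon' : g 1 < g 0 - c := by linarith
  -- first sup argument
  set S : Set ℝ := Icc (0:ℝ) 1 ∩ {t | g 0 - c * t ≤ g t} with hSdef
  have hS0 : (0:ℝ) ∈ S := ⟨⟨le_refl 0, zero_le_one⟩, by simp⟩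
  have hSclosed : IsClosed S := by
    have h1 : S = Icc (0:ℝ) 1 ∩ (fun t => g t - (g 0 - c * t)) ⁻¹' (Ici 0) := by
      ext t; simp [hSdef, sub_nonneg]
    rw [h1]
    exact ContinuousOn.preimage_isClosed_of_isClosed
      (hgcont.sub (by fun_prop)) isClosed_Icc isClosed_Ici
  have hScomp : IsCompact S :=
    isCompact_Icc.of_isClosed_subset hSclosed inter_subset_left
  set T : ℝ := sSup S with hT
  have hTS : T ∈ S := hScomp.sSup_mem ⟨0, hS0⟩
  have hT0 : 0 ≤ T := hTS.1.1
  have hT1 : T < 1 := by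
    rcases lt_or_eq_of_le hTS.1.2 with h | h
    · exact h
    · exfalso; have := hTS.2; rw [h] at this; simp at this; linarith
  have hub : ∀ t ∈ S, t ≤ T := fun t ht => le_csSup hScomp.bddAbove ht
  have hfail : ∀ t, T < t → t ≤ 1 → g t < g 0 - c * t := by
    intro t h1 h2
    by_contra hge
    push_neg at hge
    exact absurd (hub t ⟨⟨by linarith, h2⟩, hge⟩) (not_le.2 h1)
  have hne : (𝓝[Ioc T 1] T).NeBot := by
    rw [nhdsWithin_Ioc_eq_nhdsGT hT1]
    infer_instance
  have htends : Tendsto g (𝓝[Ioc T 1] T) (𝓝 (g T)) :=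
    (hgcont T ⟨hT0, hT1.le⟩).mono (Ioc_subset_Icc_self.trans
      (Icc_subset_Icc hT0 le_rfl))
  have hTeq : g T = g 0 - c * T := by
    refine le_antisymm ?_ hTS.2
    have htends2 : Tendsto (fun t => g 0 - c * t) (𝓝[Ioc T 1] T)
        (𝓝 (g 0 - c * T)) := (Continuous.tendsto (by fun_prop) T).mono_left
      nhdsWithin_le_nhds
    exact le_of_tendsto_of_tendsto htends htends2
      (eventually_mem_nhdsWithin.mono fun t ht => (hfail t ht.1 ht.2).le)
  have hstrict : ∀ t, T < t → t ≤ 1 → rho (γ t) < lam (γ t) := by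
    intro t h1 h2
    have hgt := hfail t h1 h2
    have hmemT : γ T ∈ E := hγmem T ⟨hT0, hT1.le⟩
    have hmemt : γ t ∈ E := hγmem t ⟨by linarith, h2⟩
    have h2' : g T ≤ lam (γ T) := hle _ hmemT
    have h3 := hlam _ hmemT _ hmemt
    rw [hγdist, abs_sub_comm T t, abs_of_nonneg (by linarith : (0:ℝ) ≤ t - T)] at h3
    have h3' : lam (γ T) - lam (γ t) ≤ L * ((t - T) * d) :=
      le_trans (le_abs_self _) h3
    have key : L * ((t - T) * d) ≤ c * (t - T) := by
      calc L * ((t - T) * d) = (L * d) * (t - T) := by ring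
        _ ≤ c * (t - T) := mul_le_mul_of_nonneg_right hLd (by linarith)
    have hring : c * (t - T) = c * t - c * T := by ring
    simp only [hg] at hgt hTeq h2'
    linarith
  -- choose t1 close to T
  set ε : ℝ := (g 0 - c) - g 1 with hε
  have hεpos : 0 < ε := by linarith
  have hev : ∀ᶠ t in 𝓝[Ioc T 1] T, g T - ε < g t :=
    htends.eventually (eventually_gt_nhds (by linarith))
  obtain ⟨t1, ht1g, ht1mem⟩ := (hev.and self_mem_nhdsWithin).exists
  -- second sup argument
  set S2 : Set ℝ := Icc t1 1 ∩ {t | g t1 - c * (t - t1) ≤ g t} with hS2def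
  have hS2t1 : t1 ∈ S2 := ⟨⟨le_refl _, ht1mem.2⟩, by simp⟩
  have hS2closed : IsClosed S2 := by
    have h1 : S2 = Icc t1 1 ∩ (fun t => g t - (g t1 - c * (t - t1))) ⁻¹' (Ici 0) := by
      ext t; simp [hS2def, sub_nonneg]
    rw [h1]
    refine ContinuousOn.preimage_isClosed_of_isClosed
      ((hgcont.mono (Icc_subset_Icc (by linarith [ht1mem.1]) le_rfl)).sub
        (by fun_prop)) isClosed_Icc isClosed_Ici
  have hS2comp : IsCompact S2 :=
    isCompact_Icc.of_isClosed_subset hS2closed inter_subset_left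
  set U : ℝ := sSup S2 with hU
  have hUS : U ∈ S2 := hS2comp.sSup_mem ⟨t1, hS2t1⟩
  have hU1 : U ≤ 1 := hUS.1.2
  have ht1U : t1 ≤ U := hUS.1.1
  have hTU : T < U := lt_of_lt_of_le ht1mem.1 ht1U
  have hU0 : 0 ≤ U := by linarith
  have hUeq : U = 1 := by
    by_contra hUne
    have hUlt : U < 1 := lt_of_le_of_ne hU1 hUne
    have hrl : rho (γ U) < lam (γ U) := hstrict U hTU hU1
    obtain ⟨W, hWopen, hWmem, hWlip⟩ := hloc (γ U) (hγmem U ⟨hU0, hU1⟩) hrl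
    have hpre : IsOpen (γ ⁻¹' W) := hWopen.preimage hγcont
    obtain ⟨δ, hδpos, hδ⟩ := Metric.isOpen_iff.1 hpre U hWmem
    set t2 : ℝ := min 1 (U + δ / 2) with ht2
    have hUt2 : U < t2 := lt_min hUlt (by linarith)
    have ht21 : t2 ≤ 1 := min_le_left _ _
    have ht2W : γ t2 ∈ W := hδ (by
      rw [Metric.mem_ball, Real.dist_eq, abs_of_nonneg (by linarith : (0:ℝ) ≤ t2 - U)]
      have : t2 ≤ U + δ / 2 := min_le_right _ _
      linarith)
    have ht2E : γ t2 ∈ E := hγmem t2 ⟨by linarith, ht21⟩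
    have hUE : γ U ∈ E := hγmem U ⟨hU0, hU1⟩
    have hlip := hWlip (γ t2) ⟨ht2W, ht2E⟩ (γ U) ⟨hWmem, hUE⟩
    rw [hγdist, abs_of_nonneg (by linarith : (0:ℝ) ≤ t2 - U)] at hlip
    have hlow : g U - g t2 ≤ K * ((t2 - U) * d) := by
      have := neg_abs_le (rho (γ t2) - rho (γ U))
      simp only [hg]; linarith
    have key : K * ((t2 - U) * d) ≤ c * (t2 - U) := by
      calc K * ((t2 - U) * d) = (K * d) * (t2 - U) := by ring
        _ ≤ c * (t2 - U) := mul_le_mul_of_nonneg_right hKd (by linarith)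
    have hUmem := hUS.2
    have hring : c * (t2 - t1) = c * (U - t1) + c * (t2 - U) := by ring
    have ht2S2 : t2 ∈ S2 := by
      refine ⟨⟨by linarith, ht21⟩, ?_⟩
      simp only [mem_setOf_eq] at hUmem ⊢
      linarith
    exact absurd (le_csSup hS2comp.bddAbove ht2S2) (not_le.2 hUt2)
  have hfin : g t1 - c * (1 - t1) ≤ g 1 := by
    have := hUS.2; rw [hUeq] at this; exact this
  have hc1 : c * T ≤ c * t1 := mul_le_mul_of_nonneg_left ht1mem.1.le hcpos.le
  have hr1 : c * (1 - t1) = c - c * t1 := by ring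
  linarith [ht1g, hTeq]

/-- Let `E` be a convex subset of a real normed vector
space, `lam : E → ℝ` Lipschitz with constant `L` on `E`, and `rho : E → ℝ`
continuous on `E` with `rho ≤ lam` on `E`.  If `K > 0` is such that every
`z ∈ E` with `rho z < lam z` has an open neighborhood `W` on which `rho` is
Lipschitz with constant `K` (on `W ∩ E`), then `rho` is Lipschitz on `E`
with constant `max L K`. -/
theorem stmt_2 {V : Type*} [NormedAddCommGroup V] [NormedSpace ℝ V]
    (E : Set V) (hE : Convex ℝ E)
    (lam rho : V → ℝ) (L K : ℝ) (hK : 0 < K)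
    (hlam : ∀ x ∈ E, ∀ y ∈ E, |lam x - lam y| ≤ L * ‖x - y‖)
    (hrho_cont : ContinuousOn rho E)
    (hle : ∀ z ∈ E, rho z ≤ lam z)
    (hloc : ∀ z ∈ E, rho z < lam z →
      ∃ W : Set V, IsOpen W ∧ z ∈ W ∧
        ∀ x ∈ W ∩ E, ∀ y ∈ W ∩ E, |rho x - rho y| ≤ K * ‖x - y‖) :
    ∀ x ∈ E, ∀ y ∈ E, |rho x - rho y| ≤ max L K * ‖x - y‖ := by
  intro x hx y hy
  rw [abs_sub_le_iff]
  constructor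
  · exact stmt_2_aux E hE lam rho L K hK hlam hrho_cont hle hloc hx hy
  · rw [norm_sub_rev]
    exact stmt_2_aux E hE lam rho L K hK hlam hrho_cont hle hloc hy hx
end

section
/- Let k ≥ 1 and let d be a real-valued C^∞ function on a neighborhood of 0 in ℝⁿ such that every partial derivative D^α d(0) with |α| < k vanishes, and the pure k-th partial derivative ∂ᵏd/∂x₁ᵏ(0) is nonzero. Then there exist a constant C > 0 and a neighborhood W of 0 such that every zero x = (x₁, …, xₙ) ∈ W of d (i.e. d(x) = 0) satisfies |x₁| ≤ C·max{|x₂|, …, |xₙ|}. That is, near 0 the zero set of d is contained in a cone of fixed width around the hyperplane x₁ = 0. -/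
open Set Metric

section helpers
variable {E : Type*} [NormedAddCommGroup E] [NormedSpace ℝ E]


lemma ray_taylor' {R : ℝ} {d : E → ℝ}
    (K : ℕ) (hd : ContDiffOn ℝ (K : WithTop ℕ∞) d (ball (0 : E) R)) (hK : 1 ≤ K)
    (hvanish : ∀ j : ℕ, j < K → iteratedFDeriv ℝ j d 0 = 0)
    {x : E} (hx : x ∈ ball (0 : E) R) :
    ∃ t' ∈ Set.Ioo (0:ℝ) 1,
      d x = iteratedFDeriv ℝ K d (t' • x) (fun _ => x) / (Nat.factorial K : ℝ) := by
  obtain ⟨n, rfl⟩ : ∃ n, K = n + 1 := ⟨K - 1, (Nat.succ_pred_eq_of_pos hK).symm⟩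
  have hxR : ‖x‖ < R := by simpa [mem_ball, dist_eq_norm] using hx
  have hR : (0:ℝ) < R := lt_of_le_of_lt (norm_nonneg x) hxR
  set s : Set E := ball (0 : E) R with hs
  have hso : IsOpen s := isOpen_ball
  have hsu : UniqueDiffOn ℝ s := hso.uniqueDiffOn
  set g : ℝ →L[ℝ] E := ContinuousLinearMap.toSpanSingleton ℝ x with hg
  have hgapp : ∀ t : ℝ, g t = t • x := fun t => rfl
  set w : Set ℝ := g ⁻¹' s with hw
  have hwo : IsOpen w := hso.preimage g.continuous
  have hwu : UniqueDiffOn ℝ w := hwo.uniqueDiffOn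
  have hIcc : Icc (0:ℝ) 1 ⊆ w := by
    intro t ht
    have : ‖t • x‖ < R := by
      rw [norm_smul]
      calc ‖t‖ * ‖x‖ ≤ 1 * ‖x‖ := by
            apply mul_le_mul_of_nonneg_right _ (norm_nonneg x)
            rw [Real.norm_eq_abs, abs_le]; exact ⟨by linarith [ht.1], ht.2⟩
        _ < R := by simpa using hxR
    simpa [hw, hs, mem_ball, dist_eq_norm, hgapp] using this
  have hmem : ∀ t ∈ Icc (0:ℝ) 1, g t ∈ s := fun t ht => hIcc ht
  -- h := d ∘ g is smooth on w
  set h : ℝ → ℝ := d ∘ g with hh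
  have hcomp : ContDiffOn ℝ (↑(n+1)) h w :=
    hd.comp (g.contDiff.contDiffOn) (fun t ht => ht)
  -- key identification of iterated derivatives
  have key : ∀ j : ℕ, j ≤ n + 1 → ∀ t ∈ Icc (0:ℝ) 1,
      iteratedDerivWithin j h (Icc (0:ℝ) 1) t
        = iteratedFDeriv ℝ j d (t • x) (fun _ => x) := by
    intro j hj t ht
    have hIcc_eq : iteratedFDerivWithin ℝ j h (Icc (0:ℝ) 1) t
        = iteratedFDerivWithin ℝ j h w t := by
      have H : HasFTaylorSeriesUpToOn (↑(n+1)) h (ftaylorSeriesWithin ℝ h w) (Icc (0:ℝ) 1) :=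
        (hcomp.ftaylorSeriesWithin hwu).mono hIcc
      have := H.eq_iteratedFDerivWithin_of_uniqueDiffOn (by exact_mod_cast hj)
        (uniqueDiffOn_Icc one_pos) ht
      rw [← this]; rfl
    have hcompf : iteratedFDerivWithin ℝ j h w t
        = (iteratedFDerivWithin ℝ j d s (g t)).compContinuousLinearMap (fun _ => g) :=
      g.iteratedFDerivWithin_comp_right hd hsu hwu (hmem t ht)
        (n := (↑(n+1) : ℕ∞)) (by exact_mod_cast hj)
    rw [iteratedDerivWithin_eq_iteratedFDerivWithin, hIcc_eq, hcompf]
    have hopen := iteratedFDerivWithin_of_isOpen (f := d) (𝕜 := ℝ) j hso (hmem t ht)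
    rw [hopen]
    simp [hgapp]
  -- Taylor's theorem with Lagrange remainder on [0,1]
  have hcont : ContDiffOn ℝ n h (Icc (0:ℝ) 1) :=
    (hcomp.of_le (by exact_mod_cast Nat.le_succ n)).mono hIcc
  have hcont' : ContDiffOn ℝ (↑(n+1)) h (Icc (0:ℝ) 1) := hcomp.mono hIcc
  have hdiff : DifferentiableOn ℝ (iteratedDerivWithin n h (Icc (0:ℝ) 1)) (Ioo (0:ℝ) 1) :=
    (hcont'.differentiableOn_iteratedDerivWithin (m := n)
      (by exact_mod_cast Nat.lt_succ_self n) (uniqueDiffOn_Icc one_pos)).mono Ioo_subset_Icc_self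
  obtain ⟨t', ht', htaylor⟩ := taylor_mean_remainder_lagrange (f := h) (x₀ := 0) (x := 1)
    zero_ne_one (by rw [uIcc_of_le zero_le_one]; exact hcont)
    (by rw [uIcc_of_le zero_le_one, uIoo_of_le zero_le_one]; exact hdiff)
  rw [uIcc_of_le zero_le_one] at htaylor
  rw [uIoo_of_le zero_le_one] at ht'
  refine ⟨t', ht', ?_⟩
  have hzero : taylorWithinEval h n (Icc (0:ℝ) 1) 0 1 = 0 := by
    rw [taylor_within_apply]
    apply Finset.sum_eq_zero
    intro j hj
    have hjn : j ≤ n + 1 := le_trans (Nat.le_of_lt_succ (Finset.mem_range.mp hj)) (Nat.le_succ n)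
    have hk0 := key j hjn 0 (by constructor <;> norm_num)
    rw [zero_smul] at hk0
    rw [hk0, hvanish j (Nat.lt_succ_of_le (Nat.le_of_lt_succ (Finset.mem_range.mp hj)))]
    simp
  rw [hzero, sub_zero] at htaylor
  have h1 : h 1 = d x := by simp [hh, hgapp]
  rw [key (n+1) le_rfl t' (Ioo_subset_Icc_self ht')] at htaylor
  rw [← h1, htaylor]
  ring

lemma multilinear_expand' {K : ℕ} (hK : 1 ≤ K)
    (A : ContinuousMultilinearMap ℝ (fun _ : Fin K => E) ℝ)
    (a y : E) (h : ‖y‖ ≤ ‖a‖) :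
    |A (fun _ => a + y) - A (fun _ => a)| ≤ 2^K * ‖A‖ * ‖a‖^(K-1) * ‖y‖ := by
  have hexp : A (fun _ => a + y)
      = ∑ S : Finset (Fin K), A (S.piecewise (fun _ => a) (fun _ => y)) := by
    have := A.toMultilinearMap.map_add_univ (fun _ => a) (fun _ => y)
    exact this
  have huniv : A ((Finset.univ : Finset (Fin K)).piecewise (fun _ => a) (fun _ => y))
      = A (fun _ => a) := by
    congr 1
    ext i
    simp [Finset.piecewise]
  have hsplit : A (fun _ => a + y) - A (fun _ => a)
      = ∑ S ∈ (Finset.univ : Finset (Finset (Fin K))).erase Finset.univ,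
          A (S.piecewise (fun _ => a) (fun _ => y)) := by
    rw [hexp, ← Finset.add_sum_erase _ _ (Finset.mem_univ Finset.univ), huniv]
    ring
  rw [hsplit]
  have hbound : ∀ S ∈ (Finset.univ : Finset (Finset (Fin K))).erase Finset.univ,
      |A (S.piecewise (fun _ => a) (fun _ => y))| ≤ ‖A‖ * ‖a‖^(K-1) * ‖y‖ := by
    intro S hS
    have hSne : S ≠ Finset.univ := Finset.ne_of_mem_erase hS
    obtain ⟨i₀, hi₀⟩ : ∃ i₀, i₀ ∉ S := by
      by_contra hc
      push_neg at hc
      exact hSne (Finset.eq_univ_iff_forall.mpr hc)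
    calc |A (S.piecewise (fun _ => a) (fun _ => y))|
        ≤ ‖A‖ * ∏ i, ‖S.piecewise (fun _ => a) (fun _ => y) i‖ := A.le_opNorm _
      _ ≤ ‖A‖ * (‖y‖ * ‖a‖^(K-1)) := by
          apply mul_le_mul_of_nonneg_left _ (norm_nonneg A)
          rw [← Finset.mul_prod_erase _ _ (Finset.mem_univ i₀)]
          have h1 : ‖S.piecewise (fun _ => a) (fun _ => y) i₀‖ = ‖y‖ := by
            simp [Finset.piecewise, hi₀]
          rw [h1]
          apply mul_le_mul_of_nonneg_left _ (norm_nonneg y)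
          calc ∏ i ∈ Finset.univ.erase i₀, ‖S.piecewise (fun _ => a) (fun _ => y) i‖
              ≤ ∏ _i ∈ Finset.univ.erase i₀, ‖a‖ := by
                apply Finset.prod_le_prod (fun i _ => norm_nonneg _)
                intro i _
                by_cases hiS : i ∈ S <;> simp [Finset.piecewise, hiS, h]
            _ = ‖a‖ ^ (K - 1) := by
                rw [Finset.prod_const]
                congr 1
                simp [Finset.card_erase_of_mem]
      _ = ‖A‖ * ‖a‖^(K-1) * ‖y‖ := by ring
  calc |∑ S ∈ (Finset.univ : Finset (Finset (Fin K))).erase Finset.univ,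
          A (S.piecewise (fun _ => a) (fun _ => y))|
      ≤ ∑ S ∈ (Finset.univ : Finset (Finset (Fin K))).erase Finset.univ,
          |A (S.piecewise (fun _ => a) (fun _ => y))| := Finset.abs_sum_le_sum_abs _ _
    _ ≤ ((Finset.univ : Finset (Finset (Fin K))).erase Finset.univ).card
          • (‖A‖ * ‖a‖^(K-1) * ‖y‖) := Finset.sum_le_card_nsmul _ _ _ hbound
    _ ≤ 2^K * (‖A‖ * ‖a‖^(K-1) * ‖y‖) := by
        rw [nsmul_eq_mul]
        apply mul_le_mul_of_nonneg_right
        · calc (((Finset.univ : Finset (Finset (Fin K))).erase Finset.univ).card : ℝ)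
              ≤ ((Finset.univ : Finset (Finset (Fin K))).card : ℝ) := by
                exact_mod_cast Finset.card_le_card (Finset.erase_subset _ _)
            _ = 2^K := by simp
        · positivity
    _ = 2^K * ‖A‖ * ‖a‖^(K-1) * ‖y‖ := by ring

end helpers

/-- Let `k ≥ 1` and let `d` be a real-valued `C^∞` function
on a neighborhood of `0` in `ℝⁿ` (here `n = m + 2 ≥ 2`) such that every
partial derivative of order `< k` vanishes at `0` while the pure `k`-th
partial derivative `∂ᵏd/∂x₁ᵏ(0)` is nonzero.  Then there are `C > 0` and a
neighborhood `W` of `0` such that every zero `x ∈ W` of `d` satisfies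
`|x₁| ≤ C·max{|x₂|, …, |xₙ|}`: near `0`, the zero set of `d` is contained in
a cone of fixed width around the hyperplane `x₁ = 0`. -/
theorem stmt_5 {m : ℕ} (k : ℕ) (hk : 1 ≤ k)
    (d : EuclideanSpace ℝ (Fin (m + 2)) → ℝ)
    (hd : ContDiffAt ℝ (⊤ : ℕ∞) d 0)
    (hvanish : ∀ j : ℕ, j < k → iteratedFDeriv ℝ j d 0 = 0)
    (hpure : iteratedFDeriv ℝ k d 0
        (fun _ => EuclideanSpace.single (0 : Fin (m + 2)) (1 : ℝ)) ≠ 0) :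
    ∃ C > (0 : ℝ), ∃ W ∈ nhds (0 : EuclideanSpace ℝ (Fin (m + 2))),
      ∀ x ∈ W, d x = 0 →
        |x 0| ≤ C * ⨆ i : {i : Fin (m + 2) // i ≠ 0}, |x i.1| := by
  set e₁ : EuclideanSpace ℝ (Fin (m + 2)) := EuclideanSpace.single (0 : Fin (m + 2)) (1 : ℝ) with he₁
  -- smoothness on a ball
  obtain ⟨u, hu, hdu⟩ := hd.contDiffOn (m := (k : WithTop ℕ∞)) (by exact_mod_cast le_top) (by simp)
  obtain ⟨R, hR, hRu⟩ := Metric.mem_nhds_iff.mp hu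
  have hdb : ContDiffOn ℝ (k : WithTop ℕ∞) d (ball (0 : EuclideanSpace ℝ (Fin (m + 2))) R) := hdu.mono hRu
  -- the k-th derivative and its continuity
  set F : EuclideanSpace ℝ (Fin (m + 2)) → ContinuousMultilinearMap ℝ (fun _ : Fin k => EuclideanSpace ℝ (Fin (m + 2))) ℝ :=
    fun z => iteratedFDeriv ℝ k d z with hF
  set A := F 0 with hA
  set c : ℝ := |A (fun _ => e₁)| with hc
  have hcpos : 0 < c := abs_pos.mpr hpure
  set ε : ℝ := c / 2 ^ (k + 1) with hε
  have hεpos : 0 < ε := by positivity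
  have hFcont : ContinuousOn F (ball (0 : EuclideanSpace ℝ (Fin (m + 2))) R) := by
    have h1 : ContinuousOn (iteratedFDerivWithin ℝ k d (ball (0 : EuclideanSpace ℝ (Fin (m + 2))) R)) (ball (0 : EuclideanSpace ℝ (Fin (m + 2))) R) :=
      hdb.continuousOn_iteratedFDerivWithin (by simp) isOpen_ball.uniqueDiffOn
    exact h1.congr fun z hz => (iteratedFDerivWithin_of_isOpen k isOpen_ball hz).symm
  have hFc : ContinuousAt F 0 :=
    hFcont.continuousAt (Metric.ball_mem_nhds 0 hR)
  have hnh : F ⁻¹' Metric.ball A ε ∩ ball (0 : EuclideanSpace ℝ (Fin (m + 2))) R ∈ nhds (0 : EuclideanSpace ℝ (Fin (m + 2))) :=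
    Filter.inter_mem (hFc (Metric.ball_mem_nhds A hεpos)) (Metric.ball_mem_nhds 0 hR)
  obtain ⟨r, hr, hball⟩ := Metric.mem_nhds_iff.mp hnh
  -- constants
  set B : ℝ := 2 ^ (k + 1) * ‖A‖ / c with hB
  set C : ℝ := max 1 B * Real.sqrt (m + 2) with hC
  have hmax : (0:ℝ) < max 1 B := lt_of_lt_of_le one_pos (le_max_left _ _)
  have hCpos : 0 < C := by
    apply mul_pos hmax
    apply Real.sqrt_pos.mpr; positivity
  refine ⟨C, hCpos, ball (0 : EuclideanSpace ℝ (Fin (m + 2))) r, Metric.ball_mem_nhds 0 hr, ?_⟩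
  intro x hxr hdx
  -- the sup
  haveI : Nonempty {i : Fin (m + 2) // i ≠ 0} := ⟨⟨1, one_ne_zero⟩⟩
  set s : ℝ := ⨆ i : {i : Fin (m + 2) // i ≠ 0}, |x i.1| with hsdef
  have hbdd : BddAbove (Set.range fun i : {i : Fin (m + 2) // i ≠ 0} => |x i.1|) :=
    Set.Finite.bddAbove (Set.finite_range _)
  have hle : ∀ i : Fin (m + 2), i ≠ 0 → |x i| ≤ s := fun i hi => le_ciSup hbdd ⟨i, hi⟩
  have hs0 : 0 ≤ s := le_trans (abs_nonneg _) (hle 1 one_ne_zero)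
  -- decomposition x = a + y
  set x0 : ℝ := x 0 with hx0
  set a : EuclideanSpace ℝ (Fin (m + 2)) := x0 • e₁ with ha
  set y : EuclideanSpace ℝ (Fin (m + 2)) := x - a with hy
  have hay : a + y = x := by rw [hy]; abel
  have hna : ‖a‖ = |x0| := by
    rw [ha, norm_smul, he₁, EuclideanSpace.norm_single]
    simp [Real.norm_eq_abs]
  -- ‖y‖ ≤ √(m+2) * s
  have hyi : ∀ i : Fin (m + 2), i ≠ 0 → y i = x i := by
    intro i hi
    simp [hy, ha, he₁, EuclideanSpace.single_apply, hi, PiLp.sub_apply, PiLp.smul_apply]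
  have hy0 : y 0 = 0 := by
    simp [hy, ha, he₁, EuclideanSpace.single_apply, PiLp.sub_apply, PiLp.smul_apply, hx0]
  have hys : ‖y‖ ≤ Real.sqrt (m + 2) * s := by
    rw [EuclideanSpace.norm_eq]
    have hsum : ∑ i, ‖y i‖ ^ 2 ≤ (m + 2) * s ^ 2 := by
      calc ∑ i, ‖y i‖ ^ 2 ≤ ∑ _i : Fin (m + 2), s ^ 2 := by
            apply Finset.sum_le_sum
            intro i _
            by_cases hi : i = 0
            · subst hi; rw [hy0]; simpa using sq_nonneg s
            · rw [hyi i hi, Real.norm_eq_abs]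
              exact pow_le_pow_left₀ (abs_nonneg _) (hle i hi) 2
        _ = (m + 2) * s ^ 2 := by
            rw [Finset.sum_const, Finset.card_univ, Fintype.card_fin, nsmul_eq_mul]
            push_cast; ring
    calc Real.sqrt (∑ i, ‖y i‖ ^ 2) ≤ Real.sqrt ((m + 2) * s ^ 2) := Real.sqrt_le_sqrt hsum
      _ = Real.sqrt (m + 2) * s := by
          rw [Real.sqrt_mul (by positivity : (0:ℝ) ≤ (m:ℝ) + 2) (s ^ 2), Real.sqrt_sq hs0]
  -- main estimate: |x0| ≤ max 1 B * ‖y‖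
  have hkey : |x0| ≤ max 1 B * ‖y‖ := by
    by_cases hcase : |x0| ≤ ‖y‖
    · calc |x0| ≤ ‖y‖ := hcase
        _ = 1 * ‖y‖ := (one_mul _).symm
        _ ≤ max 1 B * ‖y‖ := mul_le_mul_of_nonneg_right (le_max_left _ _) (norm_nonneg _)
    push_neg at hcase
    have hyx0 : ‖y‖ ≤ |x0| := hcase.le
    by_cases hx00 : x0 = 0
    · rw [hx00, abs_zero]; positivity
    have hx0pos : 0 < |x0| := abs_pos.mpr hx00
    -- x in the ball of radius R
    have hxr' : x ∈ F ⁻¹' Metric.ball A ε ∩ ball (0 : EuclideanSpace ℝ (Fin (m + 2))) R := hball hxr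
    have hxR : x ∈ ball (0 : EuclideanSpace ℝ (Fin (m + 2))) R := hxr'.2
    have hxnorm : ‖x‖ < r := by simpa [mem_ball, dist_eq_norm] using hxr
    -- Taylor along the ray
    obtain ⟨t', ht', htay⟩ := ray_taylor' k hdb hk hvanish hxR
    have htx : t' • x ∈ ball (0 : EuclideanSpace ℝ (Fin (m + 2))) r := by
      rw [mem_ball, dist_eq_norm, sub_zero, norm_smul]
      calc ‖t'‖ * ‖x‖ ≤ 1 * ‖x‖ := by
            apply mul_le_mul_of_nonneg_right _ (norm_nonneg x)
            rw [Real.norm_eq_abs, abs_le]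
            exact ⟨by linarith [ht'.1], ht'.2.le⟩
        _ < r := by simpa using hxnorm
    have hFtx : ‖F (t' • x) - A‖ < ε := by
      have := (hball htx).1
      simpa [Metric.mem_ball, dist_eq_norm] using this
    -- F(t'x)(x,…,x) = 0
    have hzero : F (t' • x) (fun _ => x) = 0 := by
      have hfk : (Nat.factorial k : ℝ) ≠ 0 := by positivity
      rw [hdx] at htay
      field_simp at htay
      linarith [htay]
    -- |A(x,…,x)| ≤ ε ‖x‖^k
    have hAx : |A (fun _ => x)| ≤ ε * ‖x‖ ^ k := by
      have h1 : A (fun _ => x) = (A - F (t' • x)) (fun _ => x) := by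
        rw [ContinuousMultilinearMap.sub_apply, hzero, sub_zero]
      rw [h1]
      calc |(A - F (t' • x)) (fun _ => x)|
          ≤ ‖A - F (t' • x)‖ * ∏ _i : Fin k, ‖x‖ := (A - F (t' • x)).le_opNorm _
        _ = ‖A - F (t' • x)‖ * ‖x‖ ^ k := by rw [Finset.prod_const]; simp
        _ ≤ ε * ‖x‖ ^ k := by
            apply mul_le_mul_of_nonneg_right _ (by positivity)
            rw [← norm_neg (A - F (t' • x))]
            simpa [neg_sub] using hFtx.le
    -- multilinear expansion
    have hexp : |A (fun _ => x) - A (fun _ => a)| ≤ 2^k * ‖A‖ * |x0|^(k-1) * ‖y‖ := by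
      have := multilinear_expand' hk A a y (by rw [hna]; exact hyx0)
      rw [hna] at this
      have hxa : (fun _ : Fin k => a + y) = fun _ : Fin k => x := by
        funext i; rw [hay]
      rwa [hxa] at this
    -- A(a,…,a) = x0^k • A(e₁,…,e₁)
    have hAa : A (fun _ => a) = x0 ^ k • A (fun _ => e₁) := by
      have := A.toMultilinearMap.map_smul_univ (fun _ : Fin k => x0) (fun _ : Fin k => e₁)
      simpa [ha, Finset.prod_const] using this
    have hAamod : |A (fun _ => a)| = |x0| ^ k * c := by
      rw [hAa, hc]
      rw [smul_eq_mul, abs_mul, abs_pow]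
    -- combine
    have hxle : ‖x‖ ≤ 2 * |x0| := by
      calc ‖x‖ = ‖a + y‖ := by rw [hay]
        _ ≤ ‖a‖ + ‖y‖ := norm_add_le _ _
        _ ≤ |x0| + |x0| := by rw [hna]; linarith
        _ = 2 * |x0| := by ring
    have hxpow : ‖x‖ ^ k ≤ 2 ^ k * |x0| ^ k := by
      calc ‖x‖ ^ k ≤ (2 * |x0|) ^ k := pow_le_pow_left₀ (norm_nonneg _) hxle k
        _ = 2 ^ k * |x0| ^ k := mul_pow _ _ _
    have hmain : c * |x0| ^ k ≤ ε * (2 ^ k * |x0| ^ k) + 2^k * ‖A‖ * |x0|^(k-1) * ‖y‖ := by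
      have h2 : |A (fun _ => a)| ≤ |A (fun _ => x)| + |A (fun _ => x) - A (fun _ => a)| := by
        have h2a := abs_sub_abs_le_abs_sub (A (fun _ => a)) (A (fun _ => x))
        have h2b := abs_sub_comm (A (fun _ => x)) (A (fun _ => a))
        linarith
      rw [hAamod] at h2
      have h4 : ε * ‖x‖ ^ k ≤ ε * (2 ^ k * |x0| ^ k) :=
        mul_le_mul_of_nonneg_left hxpow hεpos.le
      calc c * |x0| ^ k = |x0| ^ k * c := by ring
        _ ≤ |A (fun _ => x)| + |A (fun _ => x) - A (fun _ => a)| := h2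
        _ ≤ ε * ‖x‖ ^ k + 2^k * ‖A‖ * |x0|^(k-1) * ‖y‖ := add_le_add hAx hexp
        _ ≤ ε * (2 ^ k * |x0| ^ k) + 2^k * ‖A‖ * |x0|^(k-1) * ‖y‖ := by linarith
    -- ε * 2^k = c/2
    have hε2 : ε * 2 ^ k = c / 2 := by
      rw [hε, pow_succ]
      field_simp
    have hmain2 : (c / 2) * |x0| ^ k ≤ 2^k * ‖A‖ * |x0|^(k-1) * ‖y‖ := by
      have : ε * (2 ^ k * |x0| ^ k) = (c / 2) * |x0| ^ k := by
        rw [← mul_assoc, hε2]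
      rw [this] at hmain
      linarith
    -- divide by |x0|^(k-1)
    have hpowsplit : |x0| ^ k = |x0| * |x0| ^ (k - 1) := by
      conv_lhs => rw [show k = (k - 1) + 1 from (Nat.succ_pred_eq_of_pos hk).symm]
      rw [pow_succ]; ring
    have hppos : 0 < |x0| ^ (k - 1) := pow_pos hx0pos _
    have hdiv : (c / 2) * |x0| ≤ 2 ^ k * ‖A‖ * ‖y‖ := by
      have h5 : ((c / 2) * |x0|) * |x0| ^ (k-1) ≤ (2 ^ k * ‖A‖ * ‖y‖) * |x0| ^ (k-1) := by
        calc ((c / 2) * |x0|) * |x0| ^ (k-1) = (c / 2) * |x0| ^ k := by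
              rw [hpowsplit]; ring
          _ ≤ 2^k * ‖A‖ * |x0|^(k-1) * ‖y‖ := hmain2
          _ = (2 ^ k * ‖A‖ * ‖y‖) * |x0| ^ (k-1) := by ring
      exact le_of_mul_le_mul_right h5 hppos
    have hBle : |x0| ≤ B * ‖y‖ := by
      rw [hB, div_mul_eq_mul_div, le_div_iff₀ hcpos]
      calc |x0| * c = 2 * ((c / 2) * |x0|) := by ring
        _ ≤ 2 * (2 ^ k * ‖A‖ * ‖y‖) := by linarith
        _ = 2 ^ (k + 1) * ‖A‖ * ‖y‖ := by rw [pow_succ]; ring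
    calc |x0| ≤ B * ‖y‖ := hBle
      _ ≤ max 1 B * ‖y‖ := mul_le_mul_of_nonneg_right (le_max_right _ _) (norm_nonneg _)
  -- conclude
  calc |x 0| = |x0| := rfl
    _ ≤ max 1 B * ‖y‖ := hkey
    _ ≤ max 1 B * (Real.sqrt (m + 2) * s) := mul_le_mul_of_nonneg_left hys hmax.le
    _ = C * s := by rw [hC]; ring
end

section
/- Let I ⊆ ℝ be an open interval, k ≥ 1, ε > 0, and let N : I → Mat_{k×k}(ℝ) be a differentiable family of symmetric matrices such that the operator norm of N′(t) − Id is at most ε for every t ∈ I. Suppose t₁, t₂ ∈ I with t₁ ≠ t₂, and let w, v ∈ ℝᵏ be unit vectors with N(t₁)·w = 0 and N(t₂)·v = 0. Then |⟨w, v⟩| ≤ ε. -/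
open scoped RealInnerProductSpace

open Set Matrix

/-!
Consider `g t = ⟪v, N(t) w⟫`. It vanishes at `t₁` because `N(t₁) w = 0`, and at `t₂` because `N(t₂)`
is symmetric and kills `v`. By Rolle's theorem `g' c = ⟪v, N'(c) w⟫ = 0` for some `c` between them,
so `⟪v, w⟫ = -⟪v, (N'(c) - 1) w⟫`, which is at most `‖N'(c) - 1‖ ≤ ε` in absolute value.
-/

theorem Set.OrdConnected.exists_hasDerivAt_eq_zero {s : Set ℝ} (hs : s.OrdConnected)
    {f f' : ℝ → ℝ} (hf : ∀ t ∈ s, HasDerivAt f (f' t) t) {t₁ t₂ : ℝ} (ht₁ : t₁ ∈ s)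
    (ht₂ : t₂ ∈ s) (hne : t₁ ≠ t₂) (hf₁₂ : f t₁ = f t₂) : ∃ c ∈ s, f' c = 0 := by
  wlog hlt : t₁ < t₂ generalizing t₁ t₂
  · exact this ht₂ ht₁ hne.symm hf₁₂.symm (hne.lt_or_gt.resolve_left hlt)
  have hsub : Icc t₁ t₂ ⊆ s := hs.out ht₁ ht₂
  obtain ⟨c, hc, hc'⟩ := _root_.exists_hasDerivAt_eq_zero hlt
    (fun t ht => (hf t (hsub ht)).continuousAt.continuousWithinAt) hf₁₂
    (fun t ht => hf t (hsub (Ioo_subset_Icc_self ht)))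
  exact ⟨c, hsub (Ioo_subset_Icc_self hc), hc'⟩

theorem Matrix.hasDerivAt_dotProduct_mulVec {m n : Type*} [Fintype m] [Fintype n]
    {M : ℝ → Matrix m n ℝ} {M' : Matrix m n ℝ} {t : ℝ}
    (hM : ∀ i j, HasDerivAt (fun s => M s i j) (M' i j) t) (x : n → ℝ) (y : m → ℝ) :
    HasDerivAt (fun s => y ⬝ᵥ M s *ᵥ x) (y ⬝ᵥ M' *ᵥ x) t := by
  simp only [dotProduct, mulVec]
  exact HasDerivAt.fun_sum fun i _ =>
    (HasDerivAt.fun_sum fun j _ => (hM i j).mul_const (x j)).const_mul (y i)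

theorem Matrix.IsSymm.inner_toEuclideanCLM_comm {n : Type*} [Fintype n] [DecidableEq n]
    {M : Matrix n n ℝ} (hM : M.IsSymm) (x y : EuclideanSpace ℝ n) :
    ⟪x, toEuclideanCLM (𝕜 := ℝ) M y⟫ = ⟪toEuclideanCLM (𝕜 := ℝ) M x, y⟫ := by
  rw [real_inner_comm y, inner_toEuclideanCLM, inner_toEuclideanCLM, dotProduct_mulVec,
    ← mulVec_transpose, hM.eq, dotProduct_comm]

theorem abs_real_inner_le_norm_sub_one_of_inner_eq_zero {E : Type*}
    [NormedAddCommGroup E] [InnerProductSpace ℝ E] {A : E →L[ℝ] E} {x y : E}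
    (hA : ⟪x, A y⟫ = 0) : |⟪x, y⟫| ≤ ‖A - 1‖ * ‖x‖ * ‖y‖ :=
  calc |⟪x, y⟫| = |⟪x, (A - 1) y⟫| := by
        rw [_root_.sub_apply, one_apply_eq_self, inner_sub_right, hA,
          zero_sub, abs_neg]
    _ ≤ ‖x‖ * ‖(A - 1) y‖ := abs_real_inner_le_norm _ _
    _ ≤ ‖x‖ * (‖A - 1‖ * ‖y‖) := by gcongr; exact (A - 1).le_opNorm y
    _ = ‖A - 1‖ * ‖x‖ * ‖y‖ := by ring

theorem stmt_7_general (k : ℕ) (a b : ℝ)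
    (N N' : ℝ → Matrix (Fin k) (Fin k) ℝ) (ε : ℝ)
    (hsymm : ∀ t ∈ Set.Ioo a b, (N t).IsSymm)
    (hderiv : ∀ t ∈ Set.Ioo a b, ∀ i j : Fin k,
      HasDerivAt (fun s => N s i j) (N' t i j) t)
    (hnorm : ∀ t ∈ Set.Ioo a b,
      ‖Matrix.toEuclideanCLM (n := Fin k) (𝕜 := ℝ) (N' t - 1)‖ ≤ ε)
    (t₁ t₂ : ℝ) (ht₁ : t₁ ∈ Set.Ioo a b) (ht₂ : t₂ ∈ Set.Ioo a b)
    (hne : t₁ ≠ t₂)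
    (w v : EuclideanSpace ℝ (Fin k)) (hw : ‖w‖ = 1) (hv : ‖v‖ = 1)
    (hNw : Matrix.toEuclideanCLM (n := Fin k) (𝕜 := ℝ) (N t₁) w = 0)
    (hNv : Matrix.toEuclideanCLM (n := Fin k) (𝕜 := ℝ) (N t₂) v = 0) :
    |(inner ℝ w v : ℝ)| ≤ ε := by
  have hg : ∀ t ∈ Ioo a b, HasDerivAt (fun s => ⟪v, toEuclideanCLM (𝕜 := ℝ) (N s) w⟫)
      ⟪v, toEuclideanCLM (𝕜 := ℝ) (N' t) w⟫ t := fun t ht => by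
    simpa only [inner_toEuclideanCLM] using hasDerivAt_dotProduct_mulVec (hderiv t ht) _ _
  have hg₁₂ : ⟪v, toEuclideanCLM (𝕜 := ℝ) (N t₁) w⟫ = ⟪v, toEuclideanCLM (𝕜 := ℝ) (N t₂) w⟫ := by
    rw [hNw, (hsymm t₂ ht₂).inner_toEuclideanCLM_comm, hNv, inner_zero_left, inner_zero_right]
  obtain ⟨c, hc, hc'⟩ := ordConnected_Ioo.exists_hasDerivAt_eq_zero hg ht₁ ht₂ hne hg₁₂
  calc |⟪w, v⟫| = |⟪v, w⟫| := by rw [real_inner_comm]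
    _ ≤ ‖toEuclideanCLM (𝕜 := ℝ) (N' c) - 1‖ * ‖v‖ * ‖w‖ :=
      abs_real_inner_le_norm_sub_one_of_inner_eq_zero hc'
    _ ≤ ε := by
      rw [hv, hw, mul_one, mul_one, ← map_one (toEuclideanCLM (n := Fin k) (𝕜 := ℝ)), ← map_sub]
      exact hnorm c hc

/-- Let `I = (a,b)` be an open interval and
`N : I → Mat_{k×k}(ℝ)` a differentiable family of symmetric matrices whose
derivative `N'` satisfies `‖N'(t) − Id‖ ≤ ε` in the operator norm for all
`t ∈ I`.  If `t₁ ≠ t₂` in `I` and `w, v` are unit vectors with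
`N(t₁)·w = 0` and `N(t₂)·v = 0`, then `|⟨w, v⟩| ≤ ε`. -/
theorem stmt_7 (k : ℕ) (hk : 1 ≤ k) (a b : ℝ)
    (N N' : ℝ → Matrix (Fin k) (Fin k) ℝ) (ε : ℝ)
    (hsymm : ∀ t ∈ Set.Ioo a b, (N t).IsSymm)
    (hderiv : ∀ t ∈ Set.Ioo a b, ∀ i j : Fin k,
      HasDerivAt (fun s => N s i j) (N' t i j) t)
    (hnorm : ∀ t ∈ Set.Ioo a b,
      ‖Matrix.toEuclideanCLM (n := Fin k) (𝕜 := ℝ) (N' t - 1)‖ ≤ ε)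
    (t₁ t₂ : ℝ) (ht₁ : t₁ ∈ Set.Ioo a b) (ht₂ : t₂ ∈ Set.Ioo a b)
    (hne : t₁ ≠ t₂)
    (w v : EuclideanSpace ℝ (Fin k)) (hw : ‖w‖ = 1) (hv : ‖v‖ = 1)
    (hNw : Matrix.toEuclideanCLM (n := Fin k) (𝕜 := ℝ) (N t₁) w = 0)
    (hNv : Matrix.toEuclideanCLM (n := Fin k) (𝕜 := ℝ) (N t₂) v = 0) :
    |(inner ℝ w v : ℝ)| ≤ ε :=
  stmt_7_general k a b N N' ε hsymm hderiv hnorm t₁ t₂ ht₁ ht₂ hne w v hw hv hNw hNv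
end
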